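/- arXiv:0903.0333 — 10 statements merged into one kernel-verified Lean document; each statement's English description precedes it below -/
import Mathlib

section
/- Let ℬ be a category, let I := CategoryTheory.Prod.snd ℬ ℬ : ℬ × ℬ ⥤ ℬ be the second-projection functor and G := Functor.diag ℬ : ℬ ⥤ ℬ × ℬ the diagonal functor (so that G ⋙ I = 𝟭 ℬ). Then ℬ admits a structure of zero morphisms (Nonempty (HasZeroMorphisms ℬ)) if and only if there exists a natural transformation π : 𝟭 (ℬ × ℬ) ⟶ I ⋙ G such that for every object P = (X, B) of ℬ × ℬ the second component of π.app P is 𝟙 B (i.e., the pair (I, G, π) is a half-reflection). -/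
/-! The first component of `π.app (X, Y) : (X, Y) ⟶ (Y, Y)` is a morphism `X ⟶ Y`, and
naturality of `π` along `(f, 𝟙 Z)` and along `(𝟙 X, f)` says precisely that these morphisms
absorb composition on either side, i.e. that they are zero morphisms. Conversely `(0, 𝟙)` is
natural. -/

open CategoryTheory Limits

namespace CategoryTheory

variable {C : Type*} [Category C]

section

variable (π : 𝟭 (C × C) ⟶ Prod.snd C C ⋙ Functor.diag C)

lemma comp_fst_app_of_toSndDiag {X Y : C} (f : X ⟶ Y) (Z : C) :
    f ≫ (π.app (Y, Z)).1 = (π.app (X, Z)).1 := by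
  simpa using congrArg (·.1) (π.naturality ((f, 𝟙 Z) : (X, Z) ⟶ (Y, Z)))

lemma fst_app_comp_of_toSndDiag (X : C) {Y Z : C} (f : Y ⟶ Z) :
    (π.app (X, Y)).1 ≫ f = (π.app (X, Z)).1 := by
  simpa using (congrArg (·.1) (π.naturality ((𝟙 X, f) : (X, Y) ⟶ (X, Z)))).symm

abbrev hasZeroMorphismsOfToSndDiag : HasZeroMorphisms C where
  zero X Y := ⟨(π.app (X, Y)).1⟩
  comp_zero f Z := comp_fst_app_of_toSndDiag π f Z
  zero_comp X _ _ f := fst_app_comp_of_toSndDiag π X f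

end

variable (C) in
def toSndDiagOfHasZeroMorphisms [HasZeroMorphisms C] :
    𝟭 (C × C) ⟶ Prod.snd C C ⋙ Functor.diag C where
  app P := (0, 𝟙 P.2)

end CategoryTheory

theorem half_reflection_snd_diag_iff_pointed {ℬ : Type*} [Category ℬ] :
    Nonempty (HasZeroMorphisms ℬ) ↔
      ∃ π : 𝟭 (ℬ × ℬ) ⟶ CategoryTheory.Prod.snd ℬ ℬ ⋙ Functor.diag ℬ,
        ∀ P : ℬ × ℬ, (π.app P).2 = 𝟙 P.2 := by
  constructor
  · rintro ⟨_⟩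
    exact ⟨toSndDiagOfHasZeroMorphisms ℬ, fun _ => rfl⟩
  · rintro ⟨π, -⟩
    exact ⟨hasZeroMorphismsOfToSndDiag π⟩
end

section
/- Let ℬ be a category with zero morphisms and binary coproducts, satisfying: (A1) for all objects X, B, the coproduct injection coprod.inl : X ⟶ X ⨿ B is a kernel of coprod.desc 0 (𝟙 B) : X ⨿ B ⟶ B; and (A2, split short five lemma) for all split epimorphisms α : A ⟶ B with section β and α' : A' ⟶ B' with section β', kernels k : X ⟶ A of α and k' : X' ⟶ A' of α', and morphisms f : X ⟶ X', h : A ⟶ A', g : B ⟶ B' with k ≫ h = f ≫ k', h ≫ α' = α ≫ g, β ≫ h = g ≫ β', if f and g are isomorphisms then h is an isomorphism. Then for every split epimorphism α : A ⟶ B with section β and kernel k : X ⟶ A, the comparison morphism coprod.desc k β : X ⨿ B ⟶ A is an isomorphism. -/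
open CategoryTheory Limits

lemma coprod_desc_comp_eq_of_comp_eq_zero {C : Type*} [Category C] [HasZeroMorphisms C]
    [HasBinaryCoproducts C] {X A B : C} {α : A ⟶ B} {β : B ⟶ A} (hβ : β ≫ α = 𝟙 B)
    {k : X ⟶ A} (hk : k ≫ α = 0) :
    coprod.desc k β ≫ α = coprod.desc 0 (𝟙 B) := by
  ext <;> simp [hk, hβ]

theorem comparison_iso_of_A1_A2 {ℬ : Type*} [Category ℬ]
    [HasZeroMorphisms ℬ] [HasBinaryCoproducts ℬ]
    (A1 : ∀ X B : ℬ, Nonempty (IsLimit (KernelFork.ofι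
      (coprod.inl : X ⟶ X ⨿ B) (coprod.inl_desc 0 (𝟙 B)))))
    (A2 : ∀ {X A B X' A' B' : ℬ} (α : A ⟶ B) (β : B ⟶ A) (α' : A' ⟶ B') (β' : B' ⟶ A')
      (k : X ⟶ A) (k' : X' ⟶ A'),
      β ≫ α = 𝟙 B → β' ≫ α' = 𝟙 B' →
      ∀ (hk : k ≫ α = 0) (_ : Nonempty (IsLimit (KernelFork.ofι k hk)))
        (hk' : k' ≫ α' = 0) (_ : Nonempty (IsLimit (KernelFork.ofι k' hk')))
        (f : X ⟶ X') (h : A ⟶ A') (g : B ⟶ B'),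
        k ≫ h = f ≫ k' → h ≫ α' = α ≫ g → β ≫ h = g ≫ β' →
        IsIso f → IsIso g → IsIso h)
    {X A B : ℬ} (α : A ⟶ B) (β : B ⟶ A) (hβ : β ≫ α = 𝟙 B)
    (k : X ⟶ A) (hk : k ≫ α = 0) (hker : Nonempty (IsLimit (KernelFork.ofι k hk))) :
    IsIso (coprod.desc k β : X ⨿ B ⟶ A) := by
  -- The comparison map is a morphism from the split extension X → X ⨿ B ⇄ B, a kernel
  -- extension by (A1), to the given one, and it is the identity on kernels and on bases.
  have on_kernels : coprod.inl ≫ coprod.desc k β = 𝟙 X ≫ k :=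
    (coprod.inl_desc k β).trans (Category.id_comp k).symm
  have on_bases : coprod.desc k β ≫ α = coprod.desc 0 (𝟙 B) ≫ 𝟙 B :=
    (coprod_desc_comp_eq_of_comp_eq_zero hβ hk).trans (Category.comp_id _).symm
  have on_sections : coprod.inr ≫ coprod.desc k β = 𝟙 B ≫ β :=
    (coprod.inr_desc k β).trans (Category.id_comp β).symm
  exact A2 (coprod.desc 0 (𝟙 B)) coprod.inr α β coprod.inl k (coprod.inr_desc _ _) hβ
    (coprod.inl_desc _ _) (A1 X B) hk hker (𝟙 X) (coprod.desc k β) (𝟙 B)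
    on_kernels on_bases on_sections inferInstance inferInstance
end

section
/- Let ℬ be a category with zero morphisms and binary coproducts, satisfying: (A1) for all objects X, B, coprod.inl : X ⟶ X ⨿ B is a kernel of coprod.desc 0 (𝟙 B) : X ⨿ B ⟶ B; and suppose moreover that for every split epimorphism α : A ⟶ B with section β and kernel k : X ⟶ A, the comparison morphism coprod.desc k β : X ⨿ B ⟶ A is an isomorphism. Then the split short five lemma holds in ℬ: for all split epimorphisms α : A ⟶ B with section β and α' : A' ⟶ B' with section β', kernels k : X ⟶ A of α and k' : X' ⟶ A' of α', and morphisms f : X ⟶ X', h : A ⟶ A', g : B ⟶ B' with k ≫ h = f ≫ k', h ≫ α' = α ≫ g, β ≫ h = g ≫ β', if f and g are isomorphisms then h is an isomorphism. -/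
open CategoryTheory Limits

/-! Both split epimorphisms are coproduct decompositions via their comparison isomorphisms,
and under these identifications `h` becomes `coprod.map f g`. -/

section

variable {C : Type*} [Category C] {X A B X' A' B' : C}
  [HasBinaryCoproduct X B] [HasBinaryCoproduct X' B']

lemma coprod_desc_comp_eq_map_comp_desc {k : X ⟶ A} {β : B ⟶ A} {k' : X' ⟶ A'} {β' : B' ⟶ A'}
    {f : X ⟶ X'} {h : A ⟶ A'} {g : B ⟶ B'} (sq1 : k ≫ h = f ≫ k') (sq3 : β ≫ h = g ≫ β') :
    coprod.desc k β ≫ h = coprod.map f g ≫ coprod.desc k' β' := by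
  ext <;> simp [sq1, sq3]

lemma isIso_of_isIso_coprod_desc {k : X ⟶ A} {β : B ⟶ A} {k' : X' ⟶ A'} {β' : B' ⟶ A'}
    {f : X ⟶ X'} {h : A ⟶ A'} {g : B ⟶ B'} [IsIso (coprod.desc k β)]
    [IsIso (coprod.desc k' β')] [IsIso f] [IsIso g]
    (sq1 : k ≫ h = f ≫ k') (sq3 : β ≫ h = g ≫ β') : IsIso h := by
  have : IsIso (coprod.desc k β ≫ h) := by
    rw [coprod_desc_comp_eq_map_comp_desc sq1 sq3]
    infer_instance
  exact IsIso.of_isIso_comp_left (coprod.desc k β) h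

end

theorem split_short_five_of_A1_and_comparison_iso_general {ℬ : Type*} [Category ℬ]
    [HasZeroMorphisms ℬ] [HasBinaryCoproducts ℬ]
    (hcomp : ∀ {X A B : ℬ} (α : A ⟶ B) (β : B ⟶ A), β ≫ α = 𝟙 B →
      ∀ (k : X ⟶ A) (hk : k ≫ α = 0), Nonempty (IsLimit (KernelFork.ofι k hk)) →
        IsIso (coprod.desc k β : X ⨿ B ⟶ A))
    {X A B X' A' B' : ℬ} (α : A ⟶ B) (β : B ⟶ A) (α' : A' ⟶ B') (β' : B' ⟶ A')
    (k : X ⟶ A) (k' : X' ⟶ A')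
    (hβ : β ≫ α = 𝟙 B) (hβ' : β' ≫ α' = 𝟙 B')
    (hk : k ≫ α = 0) (hker : Nonempty (IsLimit (KernelFork.ofι k hk)))
    (hk' : k' ≫ α' = 0) (hker' : Nonempty (IsLimit (KernelFork.ofι k' hk')))
    (f : X ⟶ X') (h : A ⟶ A') (g : B ⟶ B')
    (sq1 : k ≫ h = f ≫ k') (sq3 : β ≫ h = g ≫ β')
    (hf : IsIso f) (hg : IsIso g) :
    IsIso h := by
  have := hcomp α β hβ k hk hker
  have := hcomp α' β' hβ' k' hk' hker'
  exact isIso_of_isIso_coprod_desc sq1 sq3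

theorem split_short_five_of_A1_and_comparison_iso {ℬ : Type*} [Category ℬ]
    [HasZeroMorphisms ℬ] [HasBinaryCoproducts ℬ]
    (A1 : ∀ X B : ℬ, Nonempty (IsLimit (KernelFork.ofι
      (coprod.inl : X ⟶ X ⨿ B) (coprod.inl_desc 0 (𝟙 B)))))
    (hcomp : ∀ {X A B : ℬ} (α : A ⟶ B) (β : B ⟶ A), β ≫ α = 𝟙 B →
      ∀ (k : X ⟶ A) (hk : k ≫ α = 0), Nonempty (IsLimit (KernelFork.ofι k hk)) →
        IsIso (coprod.desc k β : X ⨿ B ⟶ A))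
    {X A B X' A' B' : ℬ} (α : A ⟶ B) (β : B ⟶ A) (α' : A' ⟶ B') (β' : B' ⟶ A')
    (k : X ⟶ A) (k' : X' ⟶ A')
    (hβ : β ≫ α = 𝟙 B) (hβ' : β' ≫ α' = 𝟙 B')
    (hk : k ≫ α = 0) (hker : Nonempty (IsLimit (KernelFork.ofι k hk)))
    (hk' : k' ≫ α' = 0) (hker' : Nonempty (IsLimit (KernelFork.ofι k' hk')))
    (f : X ⟶ X') (h : A ⟶ A') (g : B ⟶ B')
    (sq1 : k ≫ h = f ≫ k') (sq2 : h ≫ α' = α ≫ g) (sq3 : β ≫ h = g ≫ β')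
    (hf : IsIso f) (hg : IsIso g) :
    IsIso h :=
  split_short_five_of_A1_and_comparison_iso_general hcomp α β α' β' k k' hβ hβ' hk hker hk' hker' f
    h g sq1 sq3 hf hg
end

section
/- Let ℬ be a category with zero morphisms, binary products, binary coproducts, and kernels of split epimorphisms, satisfying axioms (A1) (for all objects X, B, coprod.inl : X ⟶ X ⨿ B is a kernel of coprod.desc 0 (𝟙 B)) and (A2) (the split short five lemma: for all split epimorphisms with given kernels and morphisms f, h, g forming a commuting ladder, if f and g are isomorphisms then so is h). Then ℬ has binary biproducts (HasBinaryBiproducts ℬ) and ℬ admits a preadditive structure (Nonempty (CategoryTheory.Preadditive ℬ)), i.e., ℬ is an additive category. -/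
/-!
The split epimorphisms `coprod.desc 0 (𝟙 Y) : X ⨿ Y ⟶ Y` and `prod.snd : X ⨯ Y ⟶ Y` have kernels
`coprod.inl` (by (A1)) and `prod.inl`, and the canonical map `X ⨿ Y ⟶ X ⨯ Y` is a morphism between
them that is the identity on kernels and quotients; (A2) makes it an isomorphism, so binary
biproducts exist and hom-sets are commutative monoids. Applying (A2) once more, to the shear map
`(x, y) ↦ (x + y, y)` of `X ⊞ X` over the projection `biprod.snd`, shows that it is invertible;
the first component of its inverse on `(0, 𝟙 X)` is an additive inverse of `𝟙 X`, and composing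
with it negates every morphism.
-/

open CategoryTheory Limits

attribute [local simp] coprod.inl_desc coprod.inr_desc coprod.inl_desc_assoc coprod.inr_desc_assoc

namespace CategoryTheory.Limits

variable {C : Type*} [Category C] [HasZeroMorphisms C]

noncomputable def prod.isLimitKernelForkInl (X Y : C) [HasBinaryProduct X Y] :
    IsLimit (KernelFork.ofι (prod.inl X Y) (prod.inl_snd X Y)) :=
  KernelFork.IsLimit.ofι _ _ (fun g _ => g ≫ prod.fst)
    (fun g hg => by ext <;> simp [hg])
    (fun g _ m hm => by simp [← hm])

noncomputable def coprodToProd (X Y : C) [HasBinaryCoproduct X Y] [HasBinaryProduct X Y] :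
    X ⨿ Y ⟶ X ⨯ Y :=
  coprod.desc (prod.inl X Y) (prod.inr X Y)

lemma hasBinaryBiproduct_of_isIso_coprodToProd (X Y : C) [HasBinaryCoproduct X Y]
    [HasBinaryProduct X Y] [IsIso (coprodToProd X Y)] : HasBinaryBiproduct X Y := by
  let b : BinaryBicone X Y :=
    { pt := X ⨿ Y
      fst := coprodToProd X Y ≫ prod.fst
      snd := coprodToProd X Y ≫ prod.snd
      inl := coprod.inl
      inr := coprod.inr
      inl_fst := by simp [coprodToProd]
      inl_snd := by simp [coprodToProd]
      inr_fst := by simp [coprodToProd]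
      inr_snd := by simp [coprodToProd] }
  have e : (prodIsProd X Y).lift b.toCone = coprodToProd X Y :=
    prod.hom_ext ((prodIsProd X Y).fac b.toCone ⟨.left⟩)
      ((prodIsProd X Y).fac b.toCone ⟨.right⟩)
  have : IsIso ((prodIsProd X Y).lift b.toCone) := e ▸ ‹_›
  exact HasBinaryBiproduct.mk ⟨b, IsLimit.ofPointIso (prodIsProd X Y), coprodIsCoprod X Y⟩

variable (C) in
def CoprodInlIsKernel [HasBinaryCoproducts C] : Prop :=
  ∀ X B : C, Nonempty (IsLimit (KernelFork.ofι
    (coprod.inl : X ⟶ X ⨿ B) (coprod.inl_desc 0 (𝟙 B))))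

variable (C) in
def SplitShortFiveLemma : Prop :=
  ∀ {X A B X' A' B' : C} (α : A ⟶ B) (β : B ⟶ A) (α' : A' ⟶ B') (β' : B' ⟶ A')
    (k : X ⟶ A) (k' : X' ⟶ A'),
    β ≫ α = 𝟙 B → β' ≫ α' = 𝟙 B' →
    ∀ (hk : k ≫ α = 0) (_ : Nonempty (IsLimit (KernelFork.ofι k hk)))
      (hk' : k' ≫ α' = 0) (_ : Nonempty (IsLimit (KernelFork.ofι k' hk')))
      (f : X ⟶ X') (h : A ⟶ A') (g : B ⟶ B'),
      k ≫ h = f ≫ k' → h ≫ α' = α ≫ g → β ≫ h = g ≫ β' →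
      IsIso f → IsIso g → IsIso h

namespace SplitShortFiveLemma

lemma isIso_coprodToProd [HasBinaryCoproducts C] [HasBinaryProducts C]
    (hA2 : SplitShortFiveLemma C) (hA1 : CoprodInlIsKernel C) (X Y : C) :
    IsIso (coprodToProd X Y) :=
  hA2 (coprod.desc 0 (𝟙 Y)) coprod.inr prod.snd (prod.inr X Y) coprod.inl (prod.inl X Y)
    (by simp) (prod.inr_snd X Y) _ (hA1 X Y) _ ⟨prod.isLimitKernelForkInl X Y⟩
    (𝟙 X) (coprodToProd X Y) (𝟙 Y) (by simp [coprodToProd]) (by ext <;> simp [coprodToProd])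
    (by simp [coprodToProd]) inferInstance inferInstance

lemma hasBinaryBiproducts [HasBinaryCoproducts C] [HasBinaryProducts C]
    (hA2 : SplitShortFiveLemma C) (hA1 : CoprodInlIsKernel C) : HasBinaryBiproducts C where
  has_binary_biproduct X Y :=
    have := hA2.isIso_coprodToProd hA1 X Y
    hasBinaryBiproduct_of_isIso_coprodToProd X Y

end SplitShortFiveLemma

section Semiadditive

variable [HasBinaryBiproducts C]

attribute [local instance] SemiadditiveOfBinaryBiproducts.addCommMonoidHomOfHasBinaryBiproducts

noncomputable def biprod.shear (X : C) : X ⊞ X ⟶ X ⊞ X :=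
  biprod.desc biprod.inl (biprod.lift (𝟙 X) (𝟙 X))

lemma SplitShortFiveLemma.isIso_shear (hA2 : SplitShortFiveLemma C) (X : C) :
    IsIso (biprod.shear X) :=
  hA2 biprod.snd biprod.inr biprod.snd (biprod.lift (𝟙 X) (𝟙 X)) biprod.inl biprod.inl
    biprod.inr_snd (by simp) biprod.inl_snd ⟨biprod.isKernelSndKernelFork X X⟩ biprod.inl_snd
    ⟨biprod.isKernelSndKernelFork X X⟩ (𝟙 X) (biprod.shear X) (𝟙 X)
    (by simp [biprod.shear]) (by ext <;> simp [biprod.shear]) (by simp [biprod.shear])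
    inferInstance inferInstance

lemma id_add_inr_inv_shear_fst (X : C) [IsIso (biprod.shear X)] :
    𝟙 X + biprod.inr ≫ inv (biprod.shear X) ≫ biprod.fst = 0 := by
  have inl_inv : biprod.inl ≫ inv (biprod.shear X) = biprod.inl := by
    simp [IsIso.comp_inv_eq, biprod.shear]
  have diag_inv : biprod.lift (𝟙 X) (𝟙 X) ≫ inv (biprod.shear X) = biprod.inr := by
    simp [IsIso.comp_inv_eq, biprod.shear]
  have inv_fst : inv (biprod.shear X) ≫ biprod.fst =
      biprod.desc (𝟙 X) (biprod.inr ≫ inv (biprod.shear X) ≫ biprod.fst) := by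
    ext <;> simp [reassoc_of% inl_inv]
  rw [SemiadditiveOfBinaryBiproducts.add_eq_right_addition, ← inv_fst, reassoc_of% diag_inv,
    biprod.inr_fst]

lemma nonempty_preadditive_of_exists_id_add_eq_zero (h : ∀ X : C, ∃ n : X ⟶ X, 𝟙 X + n = 0) :
    Nonempty (Preadditive C) := by
  choose neg id_add_neg using h
  exact ⟨{
    homGroup X Y :=
      letI : Neg (X ⟶ Y) := ⟨(· ≫ neg Y)⟩
      { SemiadditiveOfBinaryBiproducts.addCommMonoidHomOfHasBinaryBiproducts X Y with
        zsmul := zsmulRec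
        neg_add_cancel f := by
          have hf := congrArg (f ≫ ·) (id_add_neg Y)
          simp only [SemiadditiveOfBinaryBiproducts.comp_add, Category.comp_id, comp_zero] at hf
          exact (add_comm _ _).trans hf }
    add_comp _ _ _ := SemiadditiveOfBinaryBiproducts.add_comp
    comp_add _ _ _ := SemiadditiveOfBinaryBiproducts.comp_add }⟩

lemma SplitShortFiveLemma.nonempty_preadditive (hA2 : SplitShortFiveLemma C) :
    Nonempty (Preadditive C) :=
  nonempty_preadditive_of_exists_id_add_eq_zero fun X =>
    have := hA2.isIso_shear X
    ⟨_, id_add_inr_inv_shear_fst X⟩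

end Semiadditive

end CategoryTheory.Limits

theorem additive_of_A1_A2_general {ℬ : Type*} [Category ℬ]
    [HasZeroMorphisms ℬ] [HasBinaryProducts ℬ] [HasBinaryCoproducts ℬ]
    (A1 : ∀ X B : ℬ, Nonempty (IsLimit (KernelFork.ofι
      (coprod.inl : X ⟶ X ⨿ B) (coprod.inl_desc 0 (𝟙 B)))))
    (A2 : ∀ {X A B X' A' B' : ℬ} (α : A ⟶ B) (β : B ⟶ A) (α' : A' ⟶ B') (β' : B' ⟶ A')
      (k : X ⟶ A) (k' : X' ⟶ A'),
      β ≫ α = 𝟙 B → β' ≫ α' = 𝟙 B' →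
      ∀ (hk : k ≫ α = 0) (_ : Nonempty (IsLimit (KernelFork.ofι k hk)))
        (hk' : k' ≫ α' = 0) (_ : Nonempty (IsLimit (KernelFork.ofι k' hk')))
        (f : X ⟶ X') (h : A ⟶ A') (g : B ⟶ B'),
        k ≫ h = f ≫ k' → h ≫ α' = α ≫ g → β ≫ h = g ≫ β' →
        IsIso f → IsIso g → IsIso h) :
    HasBinaryBiproducts ℬ ∧ Nonempty (Preadditive ℬ) := by
  have hA2 : SplitShortFiveLemma ℬ := @A2
  have : HasBinaryBiproducts ℬ := hA2.hasBinaryBiproducts A1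
  exact ⟨this, hA2.nonempty_preadditive⟩

theorem additive_of_A1_A2 {ℬ : Type*} [Category ℬ]
    [HasZeroMorphisms ℬ] [HasBinaryProducts ℬ] [HasBinaryCoproducts ℬ]
    (hkernels : ∀ {A B : ℬ} (α : A ⟶ B) (β : B ⟶ A), β ≫ α = 𝟙 B → HasKernel α)
    (A1 : ∀ X B : ℬ, Nonempty (IsLimit (KernelFork.ofι
      (coprod.inl : X ⟶ X ⨿ B) (coprod.inl_desc 0 (𝟙 B)))))
    (A2 : ∀ {X A B X' A' B' : ℬ} (α : A ⟶ B) (β : B ⟶ A) (α' : A' ⟶ B') (β' : B' ⟶ A')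
      (k : X ⟶ A) (k' : X' ⟶ A'),
      β ≫ α = 𝟙 B → β' ≫ α' = 𝟙 B' →
      ∀ (hk : k ≫ α = 0) (_ : Nonempty (IsLimit (KernelFork.ofι k hk)))
        (hk' : k' ≫ α' = 0) (_ : Nonempty (IsLimit (KernelFork.ofι k' hk')))
        (f : X ⟶ X') (h : A ⟶ A') (g : B ⟶ B'),
        k ≫ h = f ≫ k' → h ≫ α' = α ≫ g → β ≫ h = g ≫ β' →
        IsIso f → IsIso g → IsIso h) :
    HasBinaryBiproducts ℬ ∧ Nonempty (Preadditive ℬ) :=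
  additive_of_A1_A2_general A1 A2
end

section
/- Let ℬ be a preadditive category with binary coproducts. Then: (i) for all objects X, B, the coproduct injection coprod.inl : X ⟶ X ⨿ B is a kernel of coprod.desc 0 (𝟙 B) : X ⨿ B ⟶ B (axiom (A1)); and (ii) the split short five lemma holds: for all split epimorphisms α : A ⟶ B with section β and α' : A' ⟶ B' with section β', kernels k : X ⟶ A of α and k' : X' ⟶ A' of α', and morphisms f : X ⟶ X', h : A ⟶ A', g : B ⟶ B' with k ≫ h = f ≫ k', h ≫ α' = α ≫ g, β ≫ h = g ≫ β', if f and g are isomorphisms then h is an isomorphism (axiom (A2)). -/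
/-!
A kernel `k` of a split epimorphism `α` with section `β` splits its source: the kernel lift `r`
of `𝟙 - α ≫ β` satisfies `r ≫ k + α ≫ β = 𝟙`. In the resulting decompositions `A ≅ X ⊕ B` and
`A' ≅ X' ⊕ B'`, a morphism `h` compatible with `k, k'` and `α, α'` is upper triangular with
diagonal entries `f` and `g`, so it is invertible as soon as `f` and `g` are.
-/

open CategoryTheory Limits

section

variable {C : Type*} [Category C] [Preadditive C]

theorem coprod.total (X B : C) [HasBinaryCoproduct X B] :
    coprod.desc (𝟙 X) 0 ≫ coprod.inl + coprod.desc 0 (𝟙 B) ≫ coprod.inr = 𝟙 (X ⨿ B) := by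
  apply coprod.hom_ext <;> simp only [Preadditive.comp_add, coprod.inl_desc_assoc,
    coprod.inr_desc_assoc, Category.id_comp, zero_comp, add_zero, zero_add, Category.comp_id]

noncomputable def isLimitKernelForkCoprodInl (X B : C) [HasBinaryCoproduct X B] :
    IsLimit (KernelFork.ofι (coprod.inl : X ⟶ X ⨿ B) (coprod.inl_desc 0 (𝟙 B))) :=
  KernelFork.IsLimit.ofι _ _ (fun x _ => x ≫ coprod.desc (𝟙 X) 0)
    (fun x hx => calc
      (x ≫ coprod.desc (𝟙 X) 0) ≫ coprod.inl
          = (x ≫ coprod.desc (𝟙 X) 0) ≫ coprod.inl + (x ≫ coprod.desc 0 (𝟙 B)) ≫ coprod.inr := by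
            rw [hx, zero_comp, add_zero]
      _ = x := by
            rw [Category.assoc, Category.assoc, ← Preadditive.comp_add, coprod.total,
              Category.comp_id])
    (fun _ _ _ hm => by rw [← hm, Category.assoc, coprod.inl_desc, Category.comp_id])

namespace CategoryTheory.ShortComplex

noncomputable def Splitting.ofIsLimitOfSection (S : ShortComplex C)
    (hS : IsLimit (KernelFork.ofι S.f S.zero)) (s : S.X₃ ⟶ S.X₂) (s_g : s ≫ S.g = 𝟙 S.X₃) :
    S.Splitting :=
  let r := KernelFork.IsLimit.lift' hS (𝟙 S.X₂ - S.g ≫ s) (by simp [s_g])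
  have r_f : r.1 ≫ S.f = 𝟙 S.X₂ - S.g ≫ s := r.2
  { r := r.1
    s := s
    f_r := by
      have : Mono S.f := mono_of_isLimit_fork hS
      rw [← cancel_mono S.f, Category.assoc, r_f]
      simp
    s_g := s_g
    id := by rw [r_f, sub_add_cancel] }

theorem isIso₂_of_splitting_of_isIso₁₃ {S S' : ShortComplex C} (φ : S ⟶ S') (s : S.Splitting)
    (s' : S'.Splitting) [IsIso φ.τ₁] [IsIso φ.τ₃] : IsIso φ.τ₂ := by
  set q := s'.r ≫ inv φ.τ₁ ≫ S.f
  set t := S'.g ≫ inv φ.τ₃ ≫ s.s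
  have hq : S.f ≫ φ.τ₂ ≫ q = S.f := by simp [q, ← φ.comm₁₂_assoc, reassoc_of% s'.f_r]
  have ht : φ.τ₂ ≫ t = S.g ≫ s.s := by simp [t, φ.comm₂₃_assoc]
  have hq' : q ≫ φ.τ₂ = s'.r ≫ S'.f := by simp [q, ← φ.comm₁₂]
  have ht' : t ≫ φ.τ₂ ≫ S'.g = S'.g := by simp [t, φ.comm₂₃, reassoc_of% s.s_g]
  clear_value q t
  -- `q` and `t` invert the diagonal entries; the correction `- t ≫ φ.τ₂ ≫ q` cancels the
  -- off-diagonal entry, as for the inverse of a triangular matrix.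
  refine ⟨q + t ≫ (𝟙 _ - φ.τ₂ ≫ q), ?_, ?_⟩
  · calc φ.τ₂ ≫ (q + t ≫ (𝟙 _ - φ.τ₂ ≫ q))
          = (𝟙 _ - S.g ≫ s.s) ≫ φ.τ₂ ≫ q + S.g ≫ s.s := by
            simp only [Preadditive.comp_add, Preadditive.comp_sub, Preadditive.sub_comp,
              ht, reassoc_of% ht, Category.comp_id, Category.id_comp, Category.assoc]
            abel
        _ = s.r ≫ S.f + S.g ≫ s.s := by rw [← s.r_f, Category.assoc, hq]
        _ = 𝟙 _ := s.id
  · calc (q + t ≫ (𝟙 _ - φ.τ₂ ≫ q)) ≫ φ.τ₂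
          = s'.r ≫ S'.f + t ≫ φ.τ₂ ≫ (𝟙 _ - s'.r ≫ S'.f) := by
            simp only [Preadditive.add_comp, Preadditive.comp_sub, Preadditive.sub_comp,
              Category.assoc, hq', Category.comp_id]
        _ = s'.r ≫ S'.f + S'.g ≫ s'.s := by rw [← s'.g_s, reassoc_of% ht']
        _ = 𝟙 _ := s'.id

end CategoryTheory.ShortComplex

end

theorem preadditive_satisfies_A1_A2 {ℬ : Type*} [Category ℬ]
    [Preadditive ℬ] [HasBinaryCoproducts ℬ] :
    (∀ X B : ℬ, Nonempty (IsLimit (KernelFork.ofι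
      (coprod.inl : X ⟶ X ⨿ B) (coprod.inl_desc 0 (𝟙 B))))) ∧
    (∀ {X A B X' A' B' : ℬ} (α : A ⟶ B) (β : B ⟶ A) (α' : A' ⟶ B') (β' : B' ⟶ A')
      (k : X ⟶ A) (k' : X' ⟶ A'),
      β ≫ α = 𝟙 B → β' ≫ α' = 𝟙 B' →
      ∀ (hk : k ≫ α = 0) (_ : Nonempty (IsLimit (KernelFork.ofι k hk)))
        (hk' : k' ≫ α' = 0) (_ : Nonempty (IsLimit (KernelFork.ofι k' hk')))
        (f : X ⟶ X') (h : A ⟶ A') (g : B ⟶ B'),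
        k ≫ h = f ≫ k' → h ≫ α' = α ≫ g → β ≫ h = g ≫ β' →
        IsIso f → IsIso g → IsIso h) := by
  refine ⟨fun X B => ⟨isLimitKernelForkCoprodInl X B⟩, ?_⟩
  rintro X A B X' A' B' α β α' β' k k' hβ hβ' hk ⟨hK⟩ hk' ⟨hK'⟩ f h g hkh hα - hf hg
  let φ : ShortComplex.mk k α hk ⟶ ShortComplex.mk k' α' hk' :=
    { τ₁ := f, τ₂ := h, τ₃ := g, comm₁₂ := hkh.symm, comm₂₃ := hα }
  exact ShortComplex.isIso₂_of_splitting_of_isIso₁₃ φ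
    (.ofIsLimitOfSection _ hK β hβ) (.ofIsLimitOfSection _ hK' β' hβ')
end

section
/- Let ℬ be a category with binary products. For every split epimorphism α : A ⟶ B' with section β : B' ⟶ A (so β ≫ α = 𝟙 B'), every object B, and every morphism f : A ⟶ B, there exists a unique morphism f' : A ⟶ B ⨯ B such that f' ≫ prod.fst = f and f' ≫ prod.snd ≫ prod.lift (𝟙 B) (𝟙 B) = α ≫ β ≫ f'. (Thus the assignment B ↦ (B ⨯ B, prod.snd, prod.lift (𝟙 B) (𝟙 B), prod.fst) satisfies the universal property characterizing a right adjoint, over ℬ, to the functor sending a split epimorphism (A, α, β, B') to A.) -/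
/-! Only the idempotent `e = α ≫ β` matters. Testing `g ≫ prod.snd ≫ diag B = e ≫ g` against the
two projections gives `g ≫ prod.snd = e ≫ g ≫ prod.fst` and `g ≫ prod.snd = e ≫ g ≫ prod.snd`,
and the second follows from the first because `e` is idempotent. So the condition just prescribes
the second component of `g` to be `e ≫ f`, and `g = prod.lift f (e ≫ f)` is the unique solution. -/

open CategoryTheory Limits

namespace CategoryTheory.Limits

variable {C : Type*} [Category C] {A B : C} [HasBinaryProduct B B] {e : A ⟶ A}

lemma comp_snd_comp_diag_eq_iff (he : e ≫ e = e) (g : A ⟶ B ⨯ B) :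
    g ≫ prod.snd ≫ diag B = e ≫ g ↔ g ≫ prod.snd = e ≫ g ≫ prod.fst := by
  constructor
  · intro h
    simpa [prod.lift_fst] using h =≫ prod.fst
  · intro h
    apply prod.hom_ext
    · simpa [prod.lift_fst] using h
    · simp only [Category.assoc, diag, prod.lift_snd, Category.comp_id, h, reassoc_of% he]

theorem existsUnique_comp_fst_eq_and_comp_snd_comp_diag_eq (he : e ≫ e = e) (f : A ⟶ B) :
    ∃! g : A ⟶ B ⨯ B, g ≫ prod.fst = f ∧ g ≫ prod.snd ≫ diag B = e ≫ g := by
  simp only [comp_snd_comp_diag_eq_iff he]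
  refine ⟨prod.lift f (e ≫ f), by simp [prod.lift_fst, prod.lift_snd], ?_⟩
  rintro g ⟨hfst, hsnd⟩
  apply prod.hom_ext <;> simp [hfst, hsnd, prod.lift_fst, prod.lift_snd]

end CategoryTheory.Limits

theorem prod_right_adjoint_universal_property {ℬ : Type*} [Category ℬ]
    [HasBinaryProducts ℬ]
    {A B' : ℬ} (α : A ⟶ B') (β : B' ⟶ A) (hβ : β ≫ α = 𝟙 B')
    (B : ℬ) (f : A ⟶ B) :
    ∃! f' : A ⟶ B ⨯ B,
      f' ≫ prod.fst = f ∧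
      f' ≫ prod.snd ≫ prod.lift (𝟙 B) (𝟙 B) = α ≫ β ≫ f' := by
  have hidem : (α ≫ β) ≫ (α ≫ β) = α ≫ β := by simp [reassoc_of% hβ]
  simpa using existsUnique_comp_fst_eq_and_comp_snd_comp_diag_eq hidem f
end

section
/- Let ℬ be a category with zero morphisms, G₁ : ℬ ⥤ ℬ an endofunctor, and p, e : G₁ ⟶ 𝟭 ℬ, d : 𝟭 ℬ ⟶ G₁ natural transformations with d.app B ≫ p.app B = 𝟙 B and d.app B ≫ e.app B = 𝟙 B for every B. Assume the universal property: for all objects A, B, every idempotent t : A ⟶ A (t ≫ t = t), and every f : A ⟶ B, there exists a unique f' : A ⟶ G₁.obj B with f' ≫ p.app B = t ≫ f, f' ≫ e.app B = f, and t ≫ f' = t ≫ f ≫ d.app B. Let b' : B ⟶ G₁.obj B be the unique morphism obtained from this property with A = B, t = 0, f = 𝟙 B (so b' ≫ p.app B = 0, b' ≫ e.app B = 𝟙 B, and 0 ≫ b' = 0 ≫ d.app B). Then b' is a kernel of p.app B : G₁.obj B ⟶ B. -/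
/-!
Since `b' ≫ e.app B = 𝟙 B`, the map `b'` is a split monomorphism with retraction `e.app B`, so
factorisations through it are unique and the only candidate for a map `m` killed by `p.app B` is
`m ≫ e.app B`. It is one because, for `t = 0`, the universal property says that a morphism
killed by `p.app B` is determined by its composite with `e.app B`, and `m` and
`(m ≫ e.app B) ≫ b'` have the same composite.
-/

open CategoryTheory Limits

namespace CategoryTheory.Limits

variable {C : Type*} [Category C] [HasZeroMorphisms C]

def KernelFork.IsLimit.ofRetraction {X Y K : C} {f : X ⟶ Y} (ι : K ⟶ X) (w : ι ≫ f = 0)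
    (r : X ⟶ K) (hr : ι ≫ r = 𝟙 K) (h : ∀ {W : C} (m : W ⟶ X), m ≫ f = 0 → m ≫ r ≫ ι = m) :
    IsLimit (KernelFork.ofι ι w) :=
  KernelFork.IsLimit.ofι ι w (fun m _ => m ≫ r) (fun m hm => by rw [Category.assoc, h m hm])
    (fun _ _ l hl => by rw [← hl, Category.assoc, hr, Category.comp_id])

end CategoryTheory.Limits

theorem kernel_of_pB_from_universal_property_general {ℬ : Type*} [Category ℬ]
    [HasZeroMorphisms ℬ]
    (G₁ : ℬ ⥤ ℬ) (p e : G₁ ⟶ 𝟭 ℬ) (d : 𝟭 ℬ ⟶ G₁)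
    (univ : ∀ {A B : ℬ} (t : A ⟶ A) (f : A ⟶ B), t ≫ t = t →
      ∃! f' : A ⟶ G₁.obj B,
        f' ≫ p.app B = t ≫ f ∧ f' ≫ e.app B = f ∧ t ≫ f' = t ≫ f ≫ d.app B)
    (B : ℬ) (b' : B ⟶ G₁.obj B)
    (hb'p : b' ≫ p.app B = 0)
    (hb'e : b' ≫ e.app B = 𝟙 B) :
    Nonempty (IsLimit (KernelFork.ofι b' hb'p)) := by
  refine ⟨KernelFork.IsLimit.ofRetraction b' hb'p (e.app B) hb'e fun {W} m hm => ?_⟩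
  have hidem : (0 : W ⟶ W) ≫ (0 : W ⟶ W) = 0 := comp_zero
  rw [← Category.assoc]
  exact (univ 0 (m ≫ e.app B) hidem).unique
    ⟨by simp [hb'p], by simp [hb'e], by simp⟩ ⟨by simp [hm], rfl, by simp⟩

theorem kernel_of_pB_from_universal_property {ℬ : Type*} [Category ℬ]
    [HasZeroMorphisms ℬ]
    (G₁ : ℬ ⥤ ℬ) (p e : G₁ ⟶ 𝟭 ℬ) (d : 𝟭 ℬ ⟶ G₁)
    (hdp : ∀ B : ℬ, d.app B ≫ p.app B = 𝟙 B)
    (hde : ∀ B : ℬ, d.app B ≫ e.app B = 𝟙 B)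
    (univ : ∀ {A B : ℬ} (t : A ⟶ A) (f : A ⟶ B), t ≫ t = t →
      ∃! f' : A ⟶ G₁.obj B,
        f' ≫ p.app B = t ≫ f ∧ f' ≫ e.app B = f ∧ t ≫ f' = t ≫ f ≫ d.app B)
    (B : ℬ) (b' : B ⟶ G₁.obj B)
    (hb'p : b' ≫ p.app B = 0)
    (hb'e : b' ≫ e.app B = 𝟙 B)
    (hb'0 : (0 : B ⟶ B) ≫ b' = (0 : B ⟶ B) ≫ 𝟙 B ≫ d.app B) :
    Nonempty (IsLimit (KernelFork.ofι b' hb'p)) :=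
  kernel_of_pB_from_universal_property_general G₁ p e d univ B b' hb'p hb'e
end

section
/- Let ℬ be a category with zero morphisms and binary coproducts satisfying axiom (A1): for all objects X, B, coprod.inl : X ⟶ X ⨿ B is a kernel of coprod.desc 0 (𝟙 B) : X ⨿ B ⟶ B. Let Y, X, B be objects and let m : Y ⨿ (X ⨿ B) ⟶ X ⨿ B be a morphism such that coprod.inr ≫ m = 𝟙 (X ⨿ B) and m ≫ coprod.desc 0 (𝟙 B) = coprod.desc 0 (coprod.desc 0 (𝟙 B)). Then there exists a unique morphism u : Y ⟶ X such that m = coprod.desc (u ≫ coprod.inl) (𝟙 (X ⨿ B)). -/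
open CategoryTheory Limits

theorem eq_coprod_desc_iff {C : Type*} [Category C] {X Y Z : C} [HasBinaryCoproduct X Y]
    (m : X ⨿ Y ⟶ Z) (f : X ⟶ Z) (g : Y ⟶ Z) :
    m = coprod.desc f g ↔ coprod.inl ≫ m = f ∧ coprod.inr ≫ m = g := by
  constructor
  · rintro rfl
    exact ⟨coprod.inl_desc f g, coprod.inr_desc f g⟩
  · rintro ⟨rfl, rfl⟩
    exact coprod.hom_ext (coprod.inl_desc _ _).symm (coprod.inr_desc _ _).symm

theorem KernelFork.IsLimit.existsUnique_comp_ι {C : Type*} [Category C] [HasZeroMorphisms C]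
    {X Y : C} {α : X ⟶ Y} {s : KernelFork α} (hs : IsLimit s) {W : C} (k : W ⟶ X)
    (hk : k ≫ α = 0) : ∃! l : W ⟶ s.pt, l ≫ s.ι = k :=
  Fork.IsLimit.existsUnique hs k (by simpa using hk)

/- `m` is determined by its two components: the second is the identity, and by `hm2` the first
lands in the kernel of `coprod.desc 0 (𝟙 B)`, which by (A1) is `coprod.inl`. -/
theorem precategory_multiplication_determined {ℬ : Type*} [Category ℬ]
    [HasZeroMorphisms ℬ] [HasBinaryCoproducts ℬ]
    (A1 : ∀ X B : ℬ, Nonempty (IsLimit (KernelFork.ofι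
      (coprod.inl : X ⟶ X ⨿ B) (coprod.inl_desc 0 (𝟙 B)))))
    (Y X B : ℬ) (m : Y ⨿ (X ⨿ B) ⟶ X ⨿ B)
    (hm1 : coprod.inr ≫ m = 𝟙 (X ⨿ B))
    (hm2 : m ≫ coprod.desc 0 (𝟙 B) = coprod.desc 0 (coprod.desc 0 (𝟙 B))) :
    ∃! u : Y ⟶ X, m = coprod.desc (u ≫ coprod.inl) (𝟙 (X ⨿ B)) := by
  obtain ⟨hinl⟩ := A1 X B
  have hker : (coprod.inl ≫ m) ≫ coprod.desc 0 (𝟙 B) = 0 := by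
    rw [Category.assoc, hm2, coprod.inl_desc]
  simp_rw [eq_coprod_desc_iff, hm1, and_true, eq_comm (a := coprod.inl ≫ m)]
  exact KernelFork.IsLimit.existsUnique_comp_ι hinl _ hker
end

section
/- Let ℬ be a category with zero morphisms and binary coproducts. Let α : A ⟶ B be a split epimorphism with section β (β ≫ α = 𝟙 B), and let k : X ⟶ A be a kernel of α. Let k' : K ⟶ X ⨿ B be a kernel of coprod.desc 0 (𝟙 B) : X ⨿ B ⟶ B. Let η : X ⟶ K be the unique morphism with η ≫ k' = coprod.inl (which exists since coprod.inl ≫ coprod.desc 0 (𝟙 B) = 0), and let ξ : K ⟶ X be the unique morphism with ξ ≫ k = k' ≫ coprod.desc k β (which exists since k' ≫ coprod.desc k β ≫ α = 0). Then η ≫ ξ = 𝟙 X. -/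
open CategoryTheory Limits

theorem internal_action_unit_axiom_general {ℬ : Type*} [Category ℬ]
    [HasZeroMorphisms ℬ] [HasBinaryCoproducts ℬ]
    {X A B K : ℬ} (α : A ⟶ B) (β : B ⟶ A)
    (k : X ⟶ A) (hk : k ≫ α = 0) (hker : IsLimit (KernelFork.ofι k hk))
    (k' : K ⟶ X ⨿ B)
    (η : X ⟶ K) (hη : η ≫ k' = coprod.inl)
    (ξ : K ⟶ X) (hξ : ξ ≫ k = k' ≫ coprod.desc k β) :
    η ≫ ξ = 𝟙 X := by
  have : Mono k := mono_of_isLimit_fork hker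
  rw [← cancel_mono k, Category.assoc, hξ, reassoc_of% hη, coprod.inl_desc, Category.id_comp]

theorem internal_action_unit_axiom {ℬ : Type*} [Category ℬ]
    [HasZeroMorphisms ℬ] [HasBinaryCoproducts ℬ]
    {X A B K : ℬ} (α : A ⟶ B) (β : B ⟶ A) (hβ : β ≫ α = 𝟙 B)
    (k : X ⟶ A) (hk : k ≫ α = 0) (hker : IsLimit (KernelFork.ofι k hk))
    (k' : K ⟶ X ⨿ B) (hk' : k' ≫ coprod.desc 0 (𝟙 B) = 0)
    (hker' : IsLimit (KernelFork.ofι k' hk'))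
    (η : X ⟶ K) (hη : η ≫ k' = coprod.inl)
    (ξ : K ⟶ X) (hξ : ξ ≫ k = k' ≫ coprod.desc k β) :
    η ≫ ξ = 𝟙 X :=
  internal_action_unit_axiom_general α β k hk hker k' η hη ξ hξ
end

section
/- Let ℬ be a category with zero morphisms, binary products, and binary coproducts. Let k_X : K_X ⟶ X ⨿ B be a kernel of coprod.desc 0 (𝟙 B) : X ⨿ B ⟶ B and k_B : K_B ⟶ B ⨿ B a kernel of coprod.desc 0 (𝟙 B) : B ⨿ B ⟶ B. Let ξ_B : K_B ⟶ B be the unique morphism with ξ_B ≫ prod.lift (𝟙 B) 0 = k_B ≫ coprod.desc (prod.lift (𝟙 B) 0) (prod.lift (𝟙 B) (𝟙 B)) (which exists because prod.lift (𝟙 B) 0 is a kernel of prod.snd and k_B ≫ coprod.desc (prod.lift (𝟙 B) 0) (prod.lift (𝟙 B) (𝟙 B)) ≫ prod.snd = 0), and let m : K_X ⟶ K_B be the unique morphism with m ≫ k_B = k_X ≫ coprod.map 0 (𝟙 B) (which exists since k_X ≫ coprod.map 0 (𝟙 B) ≫ coprod.desc 0 (𝟙 B) = 0). Then m ≫ ξ_B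 = 0. -/
/-!
Projecting the defining equation of `ξ_B` to the first factor shows `ξ_B = k_B ≫ codiag B`:
conjugation, read in the first component, is just the codiagonal. Pulled back along `m`, this is
`k_X ≫ coprod.map 0 (𝟙 B) ≫ codiag B = k_X ≫ coprod.desc 0 (𝟙 B) = 0`.
-/

open CategoryTheory Limits

lemma eq_comp_codiag_of_comp_prod_lift_eq {ℬ : Type*} [Category ℬ]
    [HasBinaryProducts ℬ] [HasBinaryCoproducts ℬ] {K B : ℬ} {k : K ⟶ B ⨿ B} {ξ : K ⟶ B} {f g h : B ⟶ B}
    (hξ : ξ ≫ prod.lift (𝟙 B) f = k ≫ coprod.desc (prod.lift (𝟙 B) g) (prod.lift (𝟙 B) h)) :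
    ξ = k ≫ codiag B := by
  have := hξ =≫ prod.fst
  simpa only [Category.assoc, prod.lift_fst, Category.comp_id, coprod.desc_comp] using this

theorem conjugation_action_vanishes_on_flat_zero_general {ℬ : Type*} [Category ℬ]
    [HasZeroMorphisms ℬ] [HasBinaryProducts ℬ] [HasBinaryCoproducts ℬ]
    {X B K_X K_B : ℬ}
    (k_X : K_X ⟶ X ⨿ B) (hk_X : k_X ≫ coprod.desc 0 (𝟙 B) = 0)
    (k_B : K_B ⟶ B ⨿ B)
    (ξ_B : K_B ⟶ B)
    (hξ_B : ξ_B ≫ prod.lift (𝟙 B) 0 =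
      k_B ≫ coprod.desc (prod.lift (𝟙 B) 0) (prod.lift (𝟙 B) (𝟙 B)))
    (m : K_X ⟶ K_B)
    (hm : m ≫ k_B = k_X ≫ coprod.map 0 (𝟙 B)) :
    m ≫ ξ_B = 0 := by
  calc m ≫ ξ_B = (m ≫ k_B) ≫ codiag B := by
        rw [eq_comp_codiag_of_comp_prod_lift_eq hξ_B, Category.assoc]
    _ = k_X ≫ coprod.desc 0 (𝟙 B) := by simp [hm]
    _ = 0 := hk_X

theorem conjugation_action_vanishes_on_flat_zero {ℬ : Type*} [Category ℬ]
    [HasZeroMorphisms ℬ] [HasBinaryProducts ℬ] [HasBinaryCoproducts ℬ]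
    {X B K_X K_B : ℬ}
    (k_X : K_X ⟶ X ⨿ B) (hk_X : k_X ≫ coprod.desc 0 (𝟙 B) = 0)
    (hker_X : IsLimit (KernelFork.ofι k_X hk_X))
    (k_B : K_B ⟶ B ⨿ B) (hk_B : k_B ≫ coprod.desc 0 (𝟙 B) = 0)
    (hker_B : IsLimit (KernelFork.ofι k_B hk_B))
    (ξ_B : K_B ⟶ B)
    (hξ_B : ξ_B ≫ prod.lift (𝟙 B) 0 =
      k_B ≫ coprod.desc (prod.lift (𝟙 B) 0) (prod.lift (𝟙 B) (𝟙 B)))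
    (m : K_X ⟶ K_B)
    (hm : m ≫ k_B = k_X ≫ coprod.map 0 (𝟙 B)) :
    m ≫ ξ_B = 0 :=
  conjugation_action_vanishes_on_flat_zero_general k_X hk_X k_B ξ_B hξ_B m hm
end
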